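/- arXiv:1303.1205 — 2 statements merged into one kernel-verified Lean document; each statement's English description precedes it below -/
import Mathlib

section
/- Let p(x) = (2π)^{-d/2} |Σ|^{-1/2} exp(-(x-μ)ᵀ Σ⁻¹ (x-μ)/2) be a nondegenerate Gaussian density on ℝ^d with mean μ and covariance Σ, and let h(x) = H x for an m×d matrix H, with ĥ = H μ. Then for each j = 1,…,m, the function φ_j(x) = Σ_{k=1}^d [Σ Hᵀ]_{kj} (x_k - μ_k) satisfies ∇·(p(x) ∇φ_j(x)) = -(h_j(x) - ĥ_j) p(x) for all x ∈ ℝ^d, and ∫ φ_j p dx = 0. Consequently the matrix K with entries K_{lj} = ∂φ_j/∂x_l equals the Kalman gain Σ Hᵀ. -/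
/-!
`φ_j` is affine with constant gradient `(ΣHᵀ)_{·j}`, and the Gaussian density satisfies
`∇p = -p Σ⁻¹(x - μ)`. Hence `∇·(p∇φ_j) = ∇p · (ΣHᵀ)_{·j} = -p (HΣΣ⁻¹(x - μ))_j = -(h_j - ĥ_j) p`.
The integrand `φ_j p` is odd under the reflection `x ↦ 2μ - x`, which preserves Lebesgue measure,
so its integral vanishes; this argument needs no integrability.
-/

open MeasureTheory Real Finset

noncomputable def grad {d : ℕ} (f : (Fin d → ℝ) → ℝ) (x : Fin d → ℝ) (i : Fin d) : ℝ :=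
  fderiv ℝ f x (Pi.single i 1)

/-- Divergence of the vector field `x ↦ p(x) ∇φ(x)`. -/
noncomputable def divPgrad {d : ℕ} (p φ : (Fin d → ℝ) → ℝ) (x : Fin d → ℝ) : ℝ :=
  ∑ l, fderiv ℝ (fun y => p y * grad φ y l) x (Pi.single l 1)

open Matrix

theorem integral_eq_zero_of_odd_about {E F : Type*} [NormedAddCommGroup E] [MeasurableSpace E]
    [MeasurableAdd E] [MeasurableNeg E] [NormedAddCommGroup F] [NormedSpace ℝ F]
    (ν : Measure E) [ν.IsAddLeftInvariant] [ν.IsNegInvariant] {f : E → F} (c : E)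
    (hf : ∀ v, f (c - v) = -f (c + v)) : ∫ x, f x ∂ν = 0 := by
  set I := ∫ v, f (c + v) ∂ν
  have h_neg : I = -I := by
    calc I = ∫ v, f (c + -v) ∂ν := (integral_neg_eq_self (fun v => f (c + v)) ν).symm
      _ = -I := by simp only [← sub_eq_add_neg, hf, integral_neg, I]
  have h_two : (2 : ℝ) • I = 0 := by
    rw [two_smul]
    nth_rewrite 2 [h_neg]
    exact add_neg_cancel I
  rw [← integral_add_left_eq_self f c]
  exact (smul_eq_zero.mp h_two).resolve_left two_ne_zero

section Calculus

variable {n : Type*} [Fintype n]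

noncomputable def dotProductCLM (w : n → ℝ) : (n → ℝ) →L[ℝ] ℝ :=
  LinearMap.toContinuousLinearMap (dotProductBilin ℝ ℝ w)

@[simp]
theorem dotProductCLM_apply (w v : n → ℝ) : dotProductCLM w v = w ⬝ᵥ v := rfl

theorem hasFDerivAt_dotProduct_sub (w μ x : n → ℝ) :
    HasFDerivAt (fun y => w ⬝ᵥ (y - μ)) (dotProductCLM w) x := by
  simpa only [dotProductCLM_apply, dotProduct_sub] using
    (dotProductCLM w).hasFDerivAt.sub_const (w ⬝ᵥ μ)

theorem hasFDerivAt_sub_dotProduct_mulVec_sub (S : Matrix n n ℝ) (μ x : n → ℝ) :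
    HasFDerivAt (fun y => (y - μ) ⬝ᵥ S *ᵥ (y - μ)) (dotProductCLM ((S + Sᵀ) *ᵥ (x - μ))) x := by
  classical
  have hterm : ∀ i, HasFDerivAt (fun y => (Pi.single i 1 ⬝ᵥ (y - μ)) * (S i ⬝ᵥ (y - μ)))
      ((Pi.single i 1 ⬝ᵥ (x - μ)) • dotProductCLM (S i) +
        (S i ⬝ᵥ (x - μ)) • dotProductCLM (Pi.single i 1)) x :=
    fun i => (hasFDerivAt_dotProduct_sub _ μ x).mul (hasFDerivAt_dotProduct_sub _ μ x)
  have hsum : (fun y => (y - μ) ⬝ᵥ S *ᵥ (y - μ)) =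
      fun y => ∑ i, (Pi.single i 1 ⬝ᵥ (y - μ)) * (S i ⬝ᵥ (y - μ)) := by
    simp only [single_one_dotProduct]
    rfl
  rw [hsum]
  refine (HasFDerivAt.fun_sum fun i _ => hterm i).congr_fderiv ?_
  ext v
  simp only [_root_.sum_apply, _root_.add_apply, _root_.smul_apply,
    dotProductCLM_apply, single_one_dotProduct, smul_eq_mul,
    sum_add_distrib, add_mulVec, add_dotProduct, mulVec_transpose, ← dotProduct_mulVec]
  rw [add_comm]
  rfl

theorem hasFDerivAt_gaussian {S : Matrix n n ℝ} (hS : S.IsSymm) {c : ℝ} {μ : n → ℝ}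
    {p : (n → ℝ) → ℝ} (hp : ∀ y, p y = c * exp (-(1 / 2) * ((y - μ) ⬝ᵥ S *ᵥ (y - μ))))
    (x : n → ℝ) : HasFDerivAt p (-p x • dotProductCLM (S *ᵥ (x - μ))) x := by
  rw [funext hp]
  refine (((hasFDerivAt_sub_dotProduct_mulVec_sub S μ x).const_mul _).exp.const_mul c).congr_fderiv
    ?_
  ext v
  simp only [hS.eq, _root_.smul_apply, dotProductCLM_apply, smul_eq_mul, add_mulVec, add_dotProduct]
  ring

end Calculus

theorem grad_dotProduct_sub {d : ℕ} (w μ x : Fin d → ℝ) (l : Fin d) :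
    grad (fun y => w ⬝ᵥ (y - μ)) x l = w l := by
  rw [grad, (hasFDerivAt_dotProduct_sub w μ x).fderiv, dotProductCLM_apply, dotProduct_single_one]

theorem divPgrad_eq_of_grad_eq_const {d : ℕ} {p φ : (Fin d → ℝ) → ℝ} {p' : (Fin d → ℝ) →L[ℝ] ℝ}
    {x a : Fin d → ℝ} (hp : HasFDerivAt p p' x) (hφ : ∀ y l, grad φ y l = a l) :
    divPgrad p φ x = p' a := by
  simp only [divPgrad, hφ]
  calc ∑ l, fderiv ℝ (fun y => p y * a l) x (Pi.single l 1)
      = ∑ l, p' (Pi.single l (a l)) := by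
        refine sum_congr rfl fun l _ => ?_
        rw [(hp.mul_const (a l)).fderiv, _root_.smul_apply, ← map_smul, ← Pi.single_smul,
          smul_eq_mul, mul_one]
    _ = p' a := by rw [← map_sum, univ_sum_single]

theorem dotProduct_mulVec_inv_mul_transpose {n o R : Type*} [Fintype n] [DecidableEq n]
    [CommRing R] {Sig : Matrix n n R} (hSymm : Sig.IsSymm) (hinv : IsUnit Sig.det)
    (H : Matrix o n R) (u : n → R) (j : o) :
    Sig⁻¹ *ᵥ u ⬝ᵥ (Sig * Hᵀ)ᵀ j = (H *ᵥ u) j := by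
  rw [dotProduct_comm]
  change ((Sig * Hᵀ)ᵀ *ᵥ (Sig⁻¹ *ᵥ u)) j = _
  rw [mulVec_mulVec, transpose_mul, transpose_transpose, hSymm.eq, Matrix.mul_assoc,
    mul_nonsing_inv _ hinv, Matrix.mul_one]

/-- in the linear Gaussian case, `φ_j(x) = ∑_k [ΣHᵀ]_{kj}(x_k-μ_k)`
solves `∇·(p∇φ_j) = -(h_j-ĥ_j)p`, has zero mean, and the resulting gain
`K_{lj} = ∂φ_j/∂x_l` is the Kalman gain `ΣHᵀ`. -/
theorem gaussian_kalman_gain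
    {d m : ℕ} (Sig : Matrix (Fin d) (Fin d) ℝ) (hSig : Sig.PosDef)
    (μ : Fin d → ℝ) (H : Matrix (Fin m) (Fin d) ℝ)
    (p : (Fin d → ℝ) → ℝ)
    (hp : ∀ x, p x = (2 * π) ^ (-(d : ℝ) / 2) * (Sig.det) ^ (-(1 : ℝ) / 2) *
      Real.exp (-(1 / 2) * ∑ i, (x i - μ i) * (∑ k, Sig⁻¹ i k * (x k - μ k))))
    (h : (Fin d → ℝ) → Fin m → ℝ)
    (hh : ∀ x j, h x j = ∑ k, H j k * x k)
    (hhat : Fin m → ℝ) (hhat_def : ∀ j, hhat j = ∑ k, H j k * μ k)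
    (φ : Fin m → (Fin d → ℝ) → ℝ)
    (hφ : ∀ j x, φ j x = ∑ k, (Sig * H.transpose) k j * (x k - μ k)) :
    (∀ j x, divPgrad p (φ j) x = -(h x j - hhat j) * p x)
    ∧ (∀ j, ∫ x, φ j x * p x = 0)
    ∧ (∀ l j x, grad (φ j) x l = (Sig * H.transpose) l j) := by
  have hSymm : Sig.IsSymm := isHermitian_iff_isSymm.mp hSig.1
  have hSymm_inv : Sig⁻¹.IsSymm := isHermitian_iff_isSymm.mp hSig.inv.1
  have hp' : ∀ y, p y = (2 * π) ^ (-(d : ℝ) / 2) * Sig.det ^ (-(1 : ℝ) / 2) *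
      exp (-(1 / 2) * ((y - μ) ⬝ᵥ Sig⁻¹ *ᵥ (y - μ))) := hp
  have hφ' : ∀ j, φ j = fun y => (Sig * Hᵀ)ᵀ j ⬝ᵥ (y - μ) := fun j => funext (hφ j)
  have hgrad : ∀ l j x, grad (φ j) x l = (Sig * Hᵀ) l j := fun l j x => by
    rw [hφ' j, grad_dotProduct_sub, transpose_apply]
  refine ⟨fun j x => ?_, fun j => ?_, hgrad⟩
  · rw [divPgrad_eq_of_grad_eq_const (hasFDerivAt_gaussian hSymm_inv hp' x)
      (a := (Sig * Hᵀ)ᵀ j) (fun y l => hgrad l j y), _root_.smul_apply, dotProductCLM_apply,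
      dotProduct_mulVec_inv_mul_transpose hSymm hSig.det_pos.ne'.isUnit, mulVec_sub, hh, hhat_def]
    simp only [Pi.sub_apply, smul_eq_mul, mulVec, dotProduct]
    ring
  · refine integral_eq_zero_of_odd_about volume μ fun v => ?_
    simp only [hφ', hp', sub_sub_cancel_left, add_sub_cancel_left, dotProduct_neg, mulVec_neg,
      neg_dotProduct, neg_neg, neg_mul]
end

section
/- Suppose the gain matrix function K: ℝ^d → ℝ^{d×m} and the probability density p satisfy ∇·(pK) = -p(h - ĥ)ᵀ, and define u(x) = -½ K(x)(h(x) + ĥ) + Ω(x), where Ω_l = ½ Σ_{k,s} K_{ks} ∂K_{ls}/∂x_k. Then, assuming p, K, h are sufficiently smooth, the identity -∇·(pu) + ½ Σ_{l,k} ∂²/∂x_l∂x_k (p [KKᵀ]_{lk}) = ∇·(pK) ĥ holds, where the left-hand side is interpreted componentwise in the natural way. -/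
open MeasureTheory Real Finset

/-- Partial derivative `∂f/∂x_i`. -/
noncomputable def pd {d : ℕ} (f : (Fin d → ℝ) → ℝ) (x : Fin d → ℝ) (i : Fin d) : ℝ :=
  fderiv ℝ f x (Pi.single i 1)

section helpers

variable {d : ℕ} {f g : (Fin d → ℝ) → ℝ} {x : Fin d → ℝ} {i : Fin d}

lemma pd_add (hf : DifferentiableAt ℝ f x) (hg : DifferentiableAt ℝ g x) :
    pd (fun y => f y + g y) x i = pd f x i + pd g x i := by
  simp [pd, fderiv_fun_add hf hg]

lemma pd_mul (hf : DifferentiableAt ℝ f x) (hg : DifferentiableAt ℝ g x) :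
    pd (fun y => f y * g y) x i = pd f x i * g x + f x * pd g x i := by
  simp [pd, fderiv_fun_mul hf hg]; ring

lemma pd_const_mul (c : ℝ) (hf : DifferentiableAt ℝ f x) :
    pd (fun y => c * f y) x i = c * pd f x i := by
  simp [pd, fderiv_const_mul hf]

lemma pd_mul_const (c : ℝ) (hf : DifferentiableAt ℝ f x) :
    pd (fun y => f y * c) x i = pd f x i * c := by
  simp [pd, fderiv_mul_const hf]; ring

lemma pd_sum {ι : Type*} (s : Finset ι) (F : ι → (Fin d → ℝ) → ℝ)
    (hF : ∀ j ∈ s, DifferentiableAt ℝ (F j) x) :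
    pd (fun y => ∑ j ∈ s, F j y) x i = ∑ j ∈ s, pd (F j) x i := by
  simp only [pd, fderiv_fun_sum hF, ContinuousLinearMap.coe_sum', Finset.sum_apply]

lemma differentiable_pd (hf : ContDiff ℝ (⊤ : ℕ∞) f) (k : Fin d) :
    Differentiable ℝ (fun y => pd f y k) := by
  have h1 : ContDiff ℝ (⊤ : ℕ∞) (fderiv ℝ f) :=
    (contDiff_infty_iff_fderiv.mp (hf.of_le (by simp))).2
  exact (h1.clm_apply contDiff_const).differentiable (by simp)

end helpers

/-- with `∇·(pK) = -p(h-ĥ)ᵀ` and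
`u = -½K(h+ĥ) + Ω`, `Ω_l = ½∑_{k,s} K_{ks} ∂K_{ls}/∂x_k`, the identity
`-∇·(pu) + ½∑_{l,k}∂²(p[KKᵀ]_{lk})/∂x_l∂x_k = ∇·(pK)·ĥ` holds. -/
theorem fpf_key_identity
    {d m : ℕ} (p : (Fin d → ℝ) → ℝ) (hp_smooth : ContDiff ℝ (⊤ : ℕ∞) p)
    (hp_pos : ∀ x, 0 < p x)
    (K : (Fin d → ℝ) → Fin d → Fin m → ℝ)
    (hK_smooth : ∀ l j, ContDiff ℝ (⊤ : ℕ∞) (fun x => K x l j))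
    (h : (Fin d → ℝ) → Fin m → ℝ) (hh_smooth : ∀ j, ContDiff ℝ (⊤ : ℕ∞) (fun x => h x j))
    (hhat : Fin m → ℝ)
    (hdiv : ∀ x j, (∑ l, pd (fun y => p y * K y l j) x l) = -(p x * (h x j - hhat j)))
    (Ω : (Fin d → ℝ) → Fin d → ℝ)
    (hΩ : ∀ x l, Ω x l = (1 / 2) * ∑ k, ∑ s, K x k s * pd (fun y => K y l s) x k)
    (u : (Fin d → ℝ) → Fin d → ℝ)
    (hu : ∀ x l, u x l = -(1 / 2) * (∑ j, K x l j * (h x j + hhat j)) + Ω x l) :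
    ∀ x, -(∑ l, pd (fun y => p y * u y l) x l)
        + (1 / 2) * ∑ l, ∑ k,
            pd (fun y => pd (fun z => p z * ∑ s, K z l s * K z k s) y k) x l
      = ∑ j, (∑ l, pd (fun y => p y * K y l j) x l) * hhat j := by
  intro x
  -- basic differentiability facts
  have hpD : Differentiable ℝ p := hp_smooth.differentiable (by simp)
  have hKD : ∀ l j, Differentiable ℝ (fun y => K y l j) :=
    fun l j => (hK_smooth l j).differentiable (by simp)
  have hhD : ∀ j, Differentiable ℝ (fun y => h y j) :=
    fun j => (hh_smooth j).differentiable (by simp)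
  have hpK_smooth : ∀ l j, ContDiff ℝ (⊤ : ℕ∞) (fun y => p y * K y l j) :=
    fun l j => hp_smooth.mul (hK_smooth l j)
  have hpdKD : ∀ l s k, Differentiable ℝ (fun y => pd (fun z => K z l s) y k) :=
    fun l s k => differentiable_pd (hK_smooth l s) k
  -- the "concrete" form of u, fully expanded
  have huconc : ∀ y l, u y l = -(1 / 2) * (∑ j, K y l j * (h y j + hhat j))
      + (1 / 2) * ∑ k, ∑ s, K y k s * pd (fun z => K z l s) y k := by
    intro y l; rw [hu y l, hΩ y l]
  have huD : ∀ l, Differentiable ℝ (fun y => u y l) := by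
    intro l
    have : (fun y => u y l) = fun y => -(1 / 2) * (∑ j, K y l j * (h y j + hhat j))
        + (1 / 2) * ∑ k, ∑ s, K y k s * pd (fun z => K z l s) y k := by
      funext y; exact huconc y l
    rw [this]
    exact ((Differentiable.fun_sum fun j _ => (hKD l j).mul ((hhD j).add_const _)).const_mul
      _).add ((Differentiable.fun_sum fun k _ => Differentiable.fun_sum fun s _ =>
        (hKD k s).mul (hpdKD l s k)).const_mul _)
  -- Step A: rewrite the inner divergence using the product rule and `hdiv`
  have hFG : ∀ l, (fun y => ∑ k, pd (fun z => p z * ∑ s, K z l s * K z k s) y k)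
      = fun y => (∑ s, -(p y * (h y s - hhat s)) * K y l s)
          + ∑ k, ∑ s, (p y * K y k s) * pd (fun z => K z l s) y k := by
    intro l; funext y
    have step1 : ∀ k, pd (fun z => p z * ∑ s, K z l s * K z k s) y k
        = ∑ s, (pd (fun z => p z * K z k s) y k * K y l s
              + (p y * K y k s) * pd (fun z => K z l s) y k) := by
      intro k
      have e1 : (fun z => p z * ∑ s, K z l s * K z k s)
          = fun z => ∑ s, (p z * K z k s) * K z l s := by
        funext z; rw [Finset.mul_sum]; exact Finset.sum_congr rfl fun s _ => by ring
      rw [e1, pd_sum _ _ (fun s _ => ((hpD.fun_mul (hKD k s)) y).fun_mul ((hKD l s) y))]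
      exact Finset.sum_congr rfl fun s _ =>
        pd_mul ((hpD.fun_mul (hKD k s)) y) ((hKD l s) y)
    rw [Finset.sum_congr rfl fun k _ => step1 k, Finset.sum_comm]
    have e2 : ∀ s : Fin m, ∑ k, (pd (fun z => p z * K z k s) y k * K y l s
          + (p y * K y k s) * pd (fun z => K z l s) y k)
        = -(p y * (h y s - hhat s)) * K y l s
          + ∑ k, (p y * K y k s) * pd (fun z => K z l s) y k := by
      intro s
      rw [Finset.sum_add_distrib, ← Finset.sum_mul, hdiv y s]
    rw [Finset.sum_congr rfl fun s _ => e2 s, Finset.sum_add_distrib, Finset.sum_comm]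
  -- the rewritten inner divergence is differentiable
  have hGdiff : ∀ l, Differentiable ℝ
      (fun y => (∑ s, -(p y * (h y s - hhat s)) * K y l s)
          + ∑ k, ∑ s, (p y * K y k s) * pd (fun z => K z l s) y k) := by
    intro l
    exact (Differentiable.fun_sum fun s _ =>
        ((hpD.mul ((hhD s).sub_const _)).neg).mul (hKD l s)).add
      (Differentiable.fun_sum fun k _ => Differentiable.fun_sum fun s _ =>
        (hpD.mul (hKD k s)).mul (hpdKD l s k))
  -- Step B: for each component l, the combination is ∂_l(∑_s p K_{ls} ĥ_s)
  have key : ∀ l, -(pd (fun y => p y * u y l) x l)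
      + (1 / 2) * ∑ k, pd (fun y => pd (fun z => p z * ∑ s, K z l s * K z k s) y k) x l
      = pd (fun y => ∑ s, p y * K y l s * hhat s) x l := by
    intro l
    have hsum : ∑ k, pd (fun y => pd (fun z => p z * ∑ s, K z l s * K z k s) y k) x l
        = pd (fun y => ∑ k, pd (fun z => p z * ∑ s, K z l s * K z k s) y k) x l := by
      rw [pd_sum _ _ (fun k _ => ?_)]
      exact (differentiable_pd (hp_smooth.mul (ContDiff.sum fun s _ =>
        (hK_smooth l s).mul (hK_smooth k s))) k) x
    rw [hsum, hFG l]
    have hcomb : -(pd (fun y => p y * u y l) x l)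
        + (1 / 2) * pd (fun y => (∑ s, -(p y * (h y s - hhat s)) * K y l s)
            + ∑ k, ∑ s, (p y * K y k s) * pd (fun z => K z l s) y k) x l
        = pd (fun y => (1 / 2) * ((∑ s, -(p y * (h y s - hhat s)) * K y l s)
            + ∑ k, ∑ s, (p y * K y k s) * pd (fun z => K z l s) y k)
            + (-1) * (p y * u y l)) x l := by
      rw [pd_add ((((hGdiff l).const_mul _) x : DifferentiableAt ℝ _ x))
          (((hpD.fun_mul (huD l)).const_mul _) x),
        pd_const_mul _ ((hGdiff l) x), pd_const_mul _ ((hpD.fun_mul (huD l)) x)]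
      ring
    rw [hcomb]
    congr 1
    funext y
    rw [huconc y l]
    have hA2 : ∑ k, ∑ s, (p y * K y k s) * pd (fun z => K z l s) y k
        = p y * ∑ k, ∑ s, K y k s * pd (fun z => K z l s) y k := by
      rw [Finset.mul_sum]
      exact Finset.sum_congr rfl fun k _ => by
        rw [Finset.mul_sum]; exact Finset.sum_congr rfl fun s _ => by ring
    rw [hA2]
    have e3 : (1 / 2 : ℝ) * (∑ s, -(p y * (h y s - hhat s)) * K y l s)
        + (1 / 2) * (p y * ∑ j, K y l j * (h y j + hhat j))
        = ∑ s, p y * K y l s * hhat s := by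
      rw [Finset.mul_sum, Finset.mul_sum (a := p y), Finset.mul_sum,
        ← Finset.sum_add_distrib]
      exact Finset.sum_congr rfl fun s _ => by ring
    linear_combination e3
  -- Step C: sum over l and exchange the sums
  have lhs_eq : -(∑ l, pd (fun y => p y * u y l) x l)
      + (1 / 2) * ∑ l, ∑ k,
          pd (fun y => pd (fun z => p z * ∑ s, K z l s * K z k s) y k) x l
      = ∑ l, pd (fun y => ∑ s, p y * K y l s * hhat s) x l := by
    rw [← Finset.sum_neg_distrib, Finset.mul_sum, ← Finset.sum_add_distrib]
    exact Finset.sum_congr rfl fun l _ => key l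
  rw [lhs_eq]
  have e4 : ∀ l, pd (fun y => ∑ s, p y * K y l s * hhat s) x l
      = ∑ s, pd (fun y => p y * K y l s) x l * hhat s := by
    intro l
    rw [pd_sum _ _ (fun s _ => ((hpD.fun_mul (hKD l s)).mul_const _) x)]
    exact Finset.sum_congr rfl fun s _ => pd_mul_const _ ((hpD.fun_mul (hKD l s)) x)
  rw [Finset.sum_congr rfl fun l _ => e4 l, Finset.sum_comm]
  exact Finset.sum_congr rfl fun j _ => (Finset.sum_mul _ _ _).symm
end
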